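/- arXiv:1311.5244 — 3 statements merged into one kernel-verified Lean document; each statement's English description precedes it below -/
import Mathlib

section
/- In the setting of the recursive evolution-strategy construction (i.i.d. movements M_t^{i,j}, step sizes Σ_t, selected solutions X_t, and D_t = (−n^⊤X_{t−1})/Σ_t), if additionally the step size is constant, i.e. Σ_t = σ ∈ ℝ_+ almost surely for all t ∈ ℕ, then the one-dimensional process (D_t)_{t∈ℕ} is itself a homogeneous Markov chain: there exists a single Markov kernel κ on ℝ_+ such that for every t ∈ ℕ the conditional distribution of D_{t+1} given D_1, …, D_t equals κ(D_t) almost surely. -/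
/-!
With constant step size one generation is a fixed measurable map of the parent and of the whole
array `W_t = (M_t^{i,j})_{i,j}` of movements of that generation:
`X_t = X_{t-1} + σ • S(-n^⊤X_{t-1}, W_t)`, where `S(τ, w)` takes for every individual the first
trial below the threshold `τ` and then the smallest index with the largest first coordinate.
Dividing by `σ` gives `D_{t+1} = G(D_t, W_t)` with `G(δ, w) = δ - n^⊤S(σδ, w)`.
The arrays `W_t` are independent with the common law `P = ν^{⊗(Fin λ × ℕ)}`, and `W_t` is
independent of `X_0` together with the earlier arrays, which determine `D_1, …, D_t`.
Conditioning on `D_1, …, D_t` therefore freezes `D_t` and integrates `W_t` out, so the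
conditional law of `D_{t+1}` is `κ(D_t)`, the image of `P` under `G(D_t, ·)`.
-/

open MeasureTheory ProbabilityTheory Measure

theorem Nat.sInf_setOf_eq_iff {p : ℕ → Prop} {j : ℕ} :
    sInf {k | p k} = j ↔ (p j ∧ ∀ k < j, ¬ p k) ∨ (j = 0 ∧ ∀ k, ¬ p k) := by
  rcases em (∃ k, p k) with ⟨k, hk⟩ | hne
  · have hmem : p (sInf {k | p k}) := Nat.sInf_mem ⟨k, hk⟩
    constructor
    · rintro rfl
      exact .inl ⟨hmem, fun k hk => Nat.notMem_of_lt_sInf hk⟩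
    · rintro (⟨hj, hlt⟩ | ⟨-, hall⟩)
      · exact le_antisymm (Nat.sInf_le hj) (not_lt.1 fun h => hlt _ h hmem)
      · exact absurd hk (hall k)
  · push Not at hne
    simp [hne, eq_comm]

theorem measurable_sInf_setOf_nat {α : Type*} [MeasurableSpace α] {p : ℕ → α → Prop}
    (hp : ∀ j, Measurable (p j)) : Measurable fun x => sInf {j | p j x} := by
  refine measurable_to_countable' fun j => ?_
  simp only [Set.preimage, Set.mem_singleton_iff, Nat.sInf_setOf_eq_iff]
  exact Measurable.setOf (by fun_prop)

theorem measurable_apply_of_measurable_index {α κ V : Type*} [MeasurableSpace α]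
    [MeasurableSpace κ] [MeasurableSpace V] [Countable κ] [MeasurableSingletonClass κ]
    {g : κ → α → V} (hg : ∀ k, Measurable (g k)) {N : α → κ} (hN : Measurable N) :
    Measurable fun x => g (N x) x :=
  (measurable_from_prod_countable_left (f := fun q : α × κ => g q.2 q.1) hg).comp
    (measurable_id.prodMk hN)

section LeastArgmax

variable {ι β : Type*} [Fintype ι] [LinearOrder β]

theorem Finset.univ_filter_forall_le_nonempty [Nonempty ι] (v : ι → β) :
    (Finset.univ.filter fun i => ∀ j, v j ≤ v i).Nonempty :=
  let ⟨i, hi⟩ := Finite.exists_max v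
  ⟨i, by simpa using hi⟩

variable [LinearOrder ι] [Nonempty ι]

noncomputable def leastArgmax (v : ι → β) : ι :=
  (Finset.univ.filter fun i => ∀ j, v j ≤ v i).min' (Finset.univ_filter_forall_le_nonempty v)

theorem isLeast_leastArgmax (v : ι → β) : IsLeast {i | ∀ j, v j ≤ v i} (leastArgmax v) := by
  simpa [leastArgmax] using Finset.isLeast_min' _ (Finset.univ_filter_forall_le_nonempty v)

theorem leastArgmax_eq_iff {v : ι → β} {i : ι} :
    leastArgmax v = i ↔ IsLeast {i | ∀ j, v j ≤ v i} i :=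
  ⟨fun h => h ▸ isLeast_leastArgmax v, (isLeast_leastArgmax v).unique⟩

theorem leastArgmax_comp_strictMono {γ : Type*} [LinearOrder γ] {f : β → γ} (hf : StrictMono f)
    (v : ι → β) : leastArgmax (f ∘ v) = leastArgmax v := by
  simp [leastArgmax, hf.le_iff_le]

theorem measurable_leastArgmax [MeasurableSpace ι] [DiscreteMeasurableSpace ι]
    [TopologicalSpace β] [OrderClosedTopology β] [SecondCountableTopology β] [MeasurableSpace β]
    [OpensMeasurableSpace β] {α : Type*} [MeasurableSpace α] {v : α → ι → β}
    (hv : ∀ i, Measurable fun x => v x i) : Measurable fun x => leastArgmax (v x) := by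
  refine measurable_to_countable' fun i => ?_
  simp only [Set.preimage, Set.mem_singleton_iff, leastArgmax_eq_iff, IsLeast, lowerBounds,
    Set.mem_ofPred_eq]
  exact Measurable.setOf (by fun_prop)

end LeastArgmax

noncomputable section Selection

variable {ι V : Type*}

-- `sInf ∅ = 0`: when no trial is below `τ`, trial `0` is taken, exactly as for `J` in the theorem.
def firstIndexBelow (ℓ : V → ℝ) (τ : ℝ) (u : ℕ → V) : ℕ :=
  sInf {j | ℓ (u j) < τ}

def acceptedTrial (ℓ : V → ℝ) (τ : ℝ) (w : ι × ℕ → V) (i : ι) : V :=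
  w (i, firstIndexBelow ℓ τ fun j => w (i, j))

theorem measurable_acceptedTrial [MeasurableSpace V] {ℓ : V → ℝ} (hℓ : Measurable ℓ) (i : ι) :
    Measurable fun p : ℝ × (ι × ℕ → V) => acceptedTrial ℓ p.1 p.2 i :=
  measurable_apply_of_measurable_index (g := fun j (p : ℝ × (ι × ℕ → V)) => p.2 (i, j))
    (fun j => by fun_prop) (measurable_sInf_setOf_nat fun j => by fun_prop)

variable [Fintype ι] [LinearOrder ι] [Nonempty ι]

def selectedTrial (ℓ f : V → ℝ) (τ : ℝ) (w : ι × ℕ → V) : V :=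
  acceptedTrial ℓ τ w (leastArgmax fun i => f (acceptedTrial ℓ τ w i))

theorem measurable_selectedTrial [MeasurableSpace V] [MeasurableSpace ι]
    [DiscreteMeasurableSpace ι] {ℓ f : V → ℝ} (hℓ : Measurable ℓ) (hf : Measurable f) :
    Measurable fun p : ℝ × (ι × ℕ → V) => selectedTrial ℓ f p.1 p.2 :=
  measurable_apply_of_measurable_index (measurable_acceptedTrial hℓ)
    (measurable_leastArgmax fun i => hf.comp (measurable_acceptedTrial hℓ i))

theorem eq_add_smul_selectedTrial [AddCommGroup V] [Module ℝ V] (ℓ : V → ℝ) (f : V →ₗ[ℝ] ℝ)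
    {σ : ℝ} (hσ : 0 < σ) (x : V) (τ : ℝ) (w : ι × ℕ → V) {y : ι → V}
    (hy : ∀ i, y i = x + σ • acceptedTrial ℓ τ w i) {i₀ : ι}
    (hi₀ : IsLeast {i | ∀ i', f (y i') ≤ f (y i)} i₀) :
    y i₀ = x + σ • selectedTrial ℓ f τ w := by
  have hmono : StrictMono fun r => f x + σ * r := (strictMono_mul_left_of_pos hσ).const_add _
  have hfy : (fun i => f (y i)) =
      (fun r => f x + σ * r) ∘ fun i => f (acceptedTrial ℓ τ w i) := by
    ext i
    simp [hy]
  rw [← leastArgmax_eq_iff, hfy, leastArgmax_comp_strictMono hmono] at hi₀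
  rw [selectedTrial, hi₀, hy]

end Selection

section Blocks

variable {Ω ι κ V : Type*} {mΩ : MeasurableSpace Ω} [MeasurableSpace V] {μ : Measure Ω}
  {M : ι × κ → Ω → V} {ν : Measure V} [IsProbabilityMeasure ν]

theorem map_curry_eq_infinitePi (hM : ∀ p, Measurable (M p)) (hlaw : ∀ p, μ.map (M p) = ν)
    (hind : iIndepFun M μ) :
    μ.map (fun ω i k => M (i, k) ω) = infinitePi fun _ : ι => infinitePi fun _ : κ => ν := by
  have hfull := hind.map_fun_eq_infinitePi_map hM
  simp only [hlaw] at hfull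
  rw [← infinitePi_map_curry (fun (_ : ι) (_ : κ) => ν), ← hfull,
    Measure.map_map (MeasurableEquiv.curry ι κ V).measurable (measurable_pi_lambda _ hM)]
  rfl

theorem map_block_eq_infinitePi (hM : ∀ p, Measurable (M p)) (hlaw : ∀ p, μ.map (M p) = ν)
    (hind : iIndepFun M μ) (i : ι) :
    μ.map (fun ω k => M (i, k) ω) = infinitePi fun _ : κ => ν := by
  rw [← infinitePi_map_eval (fun _ : ι => infinitePi fun _ : κ => ν) i,
    ← map_curry_eq_infinitePi hM hlaw hind, Measure.map_map (measurable_pi_apply i) (by fun_prop)]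
  rfl

theorem iIndepFun_block (hM : ∀ p, Measurable (M p)) (hlaw : ∀ p, μ.map (M p) = ν)
    (hind : iIndepFun M μ) : iIndepFun (fun i ω k => M (i, k) ω) μ := by
  have := hind.isProbabilityMeasure
  rw [iIndepFun_iff_map_fun_eq_infinitePi_map (fun i => by fun_prop),
    map_curry_eq_infinitePi hM hlaw hind]
  simp_rw [map_block_eq_infinitePi hM hlaw hind]

end Blocks

section Independence

variable {Ω β γ δ : Type*} {mΩ : MeasurableSpace Ω} [MeasurableSpace β] [MeasurableSpace γ]
  [MeasurableSpace δ] {μ : Measure Ω} [IsProbabilityMeasure μ]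

theorem indepFun_prodMk_of_indepFun_prodMk {X : Ω → β} {Y : Ω → γ} {Z : Ω → δ}
    (hX : Measurable X) (hY : Measurable Y) (hZ : Measurable Z)
    (hXYZ : IndepFun X (fun ω => (Y ω, Z ω)) μ) (hYZ : IndepFun Y Z μ) :
    IndepFun (fun ω => (X ω, Y ω)) Z μ := by
  -- the joint law `μ_X ⊗ (μ_Y ⊗ μ_Z)` reassociates to `(μ_X ⊗ μ_Y) ⊗ μ_Z`
  have hXY : IndepFun X Y μ := hXYZ.comp measurable_id measurable_fst
  rw [indepFun_iff_map_prod_eq_prod_map_map hX.aemeasurable hY.aemeasurable] at hXY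
  rw [indepFun_iff_map_prod_eq_prod_map_map hX.aemeasurable (hY.prodMk hZ).aemeasurable] at hXYZ
  rw [indepFun_iff_map_prod_eq_prod_map_map hY.aemeasurable hZ.aemeasurable] at hYZ
  rw [indepFun_iff_map_prod_eq_prod_map_map (hX.prodMk hY).aemeasurable hZ.aemeasurable, hXY,
    ← MeasurableEquiv.prodAssoc.map_measurableEquiv_injective.eq_iff, Measure.prodAssoc_prod,
    ← hYZ, ← hXYZ,
    Measure.map_map MeasurableEquiv.prodAssoc.measurable ((hX.prodMk hY).prodMk hZ)]
  rfl

theorem indepFun_prodMk_range {X₀ : Ω → β} {W : ℕ → Ω → γ} (hX₀ : Measurable X₀)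
    (hW : ∀ s, Measurable (W s)) (h₀ : IndepFun X₀ (fun ω s => W s ω) μ)
    (hWind : iIndepFun W μ) (t : ℕ) :
    IndepFun (fun ω => (X₀ ω, fun s : Finset.range t => W s ω)) (W t) μ := by
  have hsplit : Measurable fun a : ℕ → γ => (fun s : Finset.range t => a s, a t) := by fun_prop
  refine indepFun_prodMk_of_indepFun_prodMk hX₀ (by fun_prop) (hW t)
    (h₀.comp measurable_id hsplit) ?_
  exact (hWind.indepFun_finset (Finset.range t) {t} (by simp) hW).comp measurable_id
    (measurable_pi_apply ⟨t, Finset.mem_singleton_self t⟩)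

end Independence

theorem measurable_comap_prodMk_range {Ω β γ : Type*} [MeasurableSpace β] [MeasurableSpace γ]
    {X : ℕ → Ω → β} {W : ℕ → Ω → γ} {Φ : β × γ → β} (hΦ : Measurable Φ)
    (hrec : ∀ s ω, X (s + 1) ω = Φ (X s ω, W (s + 1) ω)) {r t : ℕ} (hrt : r < t) :
    Measurable[MeasurableSpace.comap (fun ω => (X 0 ω, fun s : Finset.range t => W s ω))
      inferInstance] (X r) := by
  set past := fun ω => (X 0 ω, fun s : Finset.range t => W s ω)
  let _ : MeasurableSpace Ω := MeasurableSpace.comap past inferInstance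
  have hpast : Measurable past := comap_measurable past
  induction r with
  | zero => exact measurable_fst.comp hpast
  | succ r ih =>
    have hW : Measurable fun ω => (past ω).2 ⟨r + 1, Finset.mem_range.2 hrt⟩ := by fun_prop
    rw [show X (r + 1) = _ from funext (hrec r)]
    exact hΦ.comp ((ih (by omega)).prodMk hW)

noncomputable section Freezing

variable {Ω α β γ : Type*} {m mΩ : MeasurableSpace Ω} [MeasurableSpace α] [MeasurableSpace β]
  [MeasurableSpace γ] {μ : Measure Ω}

def randomMapKernel (G : β × γ → α) (P : Measure γ) [SFinite P] : Kernel β α :=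
  (Kernel.id ×ₖ Kernel.const β P).map G

theorem randomMapKernel_apply {G : β × γ → α} (hG : Measurable G) (P : Measure γ) [SFinite P]
    (b : β) : randomMapKernel G P b = P.map fun w => G (b, w) := by
  rw [randomMapKernel, Kernel.map_apply _ hG, Kernel.prod_apply, Kernel.id_apply,
    Kernel.const_apply, Measure.dirac_prod, Measure.map_map hG measurable_prodMk_left]
  rfl

theorem isMarkovKernel_randomMapKernel {G : β × γ → α} (hG : Measurable G) (P : Measure γ)
    [IsProbabilityMeasure P] : IsMarkovKernel (randomMapKernel G P) :=
  Kernel.IsMarkovKernel.map _ hG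

theorem map_restrict_prodMk_eq_prod_of_indep [IsFiniteMeasure μ] {Z : Ω → β} {W : Ω → γ}
    (hm : m ≤ mΩ) (hZ : Measurable[m] Z) (hW : Measurable W)
    (hind : Indep m (MeasurableSpace.comap W inferInstance) μ) {S : Set Ω}
    (hS : MeasurableSet[m] S) :
    (μ.restrict S).map (fun ω => (Z ω, W ω)) = ((μ.restrict S).map Z).prod (μ.map W) := by
  have hZ' : Measurable Z := hZ.mono hm le_rfl
  refine (Measure.prod_eq fun B C hB hC => ?_).symm
  rw [Measure.map_apply (hZ'.prodMk hW) (hB.prod hC), Measure.map_apply hZ' hB,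
    Measure.map_apply hW hC, Measure.restrict_apply' (hm S hS), Measure.restrict_apply' (hm S hS),
    Set.mk_preimage_prod, Set.inter_right_comm]
  exact (Indep_iff _ _ _).1 hind _ _ ((hZ hB).inter hS) ⟨C, hC, rfl⟩

theorem measure_inter_preimage_eq_setLIntegral_of_indep [IsFiniteMeasure μ] {Z : Ω → β}
    {W : Ω → γ} (hm : m ≤ mΩ) (hZ : Measurable[m] Z) (hW : Measurable W)
    (hind : Indep m (MeasurableSpace.comap W inferInstance) μ) {S : Set Ω}
    (hS : MeasurableSet[m] S) {G : β × γ → α} (hG : Measurable G) {A : Set α}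
    (hA : MeasurableSet A) :
    μ (S ∩ (fun ω => G (Z ω, W ω)) ⁻¹' A) =
      ∫⁻ ω in S, randomMapKernel G (μ.map W) (Z ω) A ∂μ := by
  have hZ' : Measurable Z := hZ.mono hm le_rfl
  have hκ : ∀ b, randomMapKernel G (μ.map W) b A = μ.map W (Prod.mk b ⁻¹' (G ⁻¹' A)) :=
    fun b => by
      rw [randomMapKernel_apply hG, Measure.map_apply (by fun_prop) hA]
      rfl
  simp_rw [hκ]
  calc μ (S ∩ (fun ω => G (Z ω, W ω)) ⁻¹' A)
      = (μ.restrict S).map (fun ω => (Z ω, W ω)) (G ⁻¹' A) := by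
        rw [Measure.map_apply (hZ'.prodMk hW) (hG hA), Measure.restrict_apply' (hm S hS),
          Set.inter_comm]
        rfl
    _ = _ := by
        rw [map_restrict_prodMk_eq_prod_of_indep hm hZ hW hind hS, Measure.prod_apply (hG hA),
          lintegral_map (measurable_measure_prodMk_left (hG hA)) hZ']

theorem condExp_indicator_comp_ae_eq_of_indep [IsProbabilityMeasure μ] {Z : Ω → β}
    {W : Ω → γ} (hm : m ≤ mΩ) (hZ : Measurable[m] Z) (hW : Measurable W)
    (hind : Indep m (MeasurableSpace.comap W inferInstance) μ) {G : β × γ → α}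
    (hG : Measurable G) {A : Set α} (hA : MeasurableSet A) :
    μ[fun ω => A.indicator (fun _ => (1 : ℝ)) (G (Z ω, W ω)) | m] =ᵐ[μ]
      fun ω => (randomMapKernel G (μ.map W) (Z ω) A).toReal := by
  have := isProbabilityMeasure_map (μ := μ) hW.aemeasurable
  have := isMarkovKernel_randomMapKernel hG (μ.map W)
  set κ := randomMapKernel G (μ.map W)
  have hpre : MeasurableSet ((fun ω => G (Z ω, W ω)) ⁻¹' A) :=
    (hG.comp ((hZ.mono hm le_rfl).prodMk hW)) hA
  have hκZ : Measurable[m] fun ω => κ (Z ω) A := (κ.measurable_coe hA).comp hZ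
  refine (ae_eq_condExp_of_forall_setIntegral_eq hm ?_ (fun S _ _ => ?_) (fun S hS _ => ?_)
    hκZ.ennreal_toReal.aestronglyMeasurable).symm
  · exact (integrable_const 1).indicator hpre
  · exact (Integrable.of_bound (hκZ.mono hm le_rfl).ennreal_toReal.aestronglyMeasurable 1
      (Filter.Eventually.of_forall fun ω => by
        simpa using ENNReal.toReal_mono ENNReal.one_ne_top prob_le_one)).integrableOn
  · change ∫ ω in S, (κ (Z ω) A).toReal ∂μ =
      ∫ ω in S, ((fun ω => G (Z ω, W ω)) ⁻¹' A).indicator (fun _ => (1 : ℝ)) ω ∂μ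
    rw [integral_indicator_const _ hpre, integral_toReal (hκZ.mono hm le_rfl).aemeasurable
      (Filter.Eventually.of_forall fun ω => measure_lt_top _ _), measureReal_def,
      Measure.restrict_apply hpre, Set.inter_comm,
      measure_inter_preimage_eq_setLIntegral_of_indep hm hZ hW hind hS hG hA, smul_eq_mul,
      mul_one]

end Freezing

theorem condExp_indicator_ae_eq_of_recursion {Ω α β γ : Type*} {mΩ : MeasurableSpace Ω}
    [MeasurableSpace α] [MeasurableSpace β] [MeasurableSpace γ] {μ : Measure Ω}
    [IsProbabilityMeasure μ] {X : ℕ → Ω → β} {W : ℕ → Ω → γ} {D : ℕ → Ω → α}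
    {Φ : β × γ → β} {h : β → α} {G : α × γ → α} (hΦ : Measurable Φ) (hh : Measurable h)
    (hG : Measurable G) (hX₀ : Measurable (X 0)) (hW : ∀ s, Measurable (W s))
    (h₀ : IndepFun (X 0) (fun ω s => W s ω) μ) (hWind : iIndepFun W μ)
    (hrec : ∀ s ω, X (s + 1) ω = Φ (X s ω, W (s + 1) ω)) (hD : ∀ s, D (s + 1) = h ∘ X s)
    (hDrec : ∀ s, D (s + 1 + 1) = fun ω => G (D (s + 1) ω, W (s + 1) ω)) {t : ℕ} (ht : 1 ≤ t)
    {P : Measure γ} [SFinite P] (hlaw : μ.map (W t) = P) {A : Set α} (hA : MeasurableSet A) :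
    μ[fun ω => A.indicator (fun _ => (1 : ℝ)) (D (t + 1) ω) |
        ⨆ s ∈ Set.Icc 1 t, MeasurableSpace.comap (D s) inferInstance] =ᵐ[μ]
      fun ω => (randomMapKernel G P (D t ω) A).toReal := by
  subst hlaw
  obtain ⟨r, rfl⟩ := Nat.exists_eq_add_of_le' ht
  set past := fun ω => (X 0 ω, fun s : Finset.range (r + 1) => W s ω)
  have hm : (⨆ s ∈ Set.Icc 1 (r + 1), MeasurableSpace.comap (D s) inferInstance) ≤
      MeasurableSpace.comap past inferInstance := by
    refine iSup₂_le fun s hs => ?_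
    obtain ⟨q, rfl⟩ := Nat.exists_eq_add_of_le' hs.1
    rw [hD]
    exact (hh.comp (measurable_comap_prodMk_range hΦ hrec hs.2)).comap_le
  rw [hDrec r]
  exact condExp_indicator_comp_ae_eq_of_indep (hm.trans (by fun_prop : Measurable past).comap_le)
    (measurable_iff_comap_le.2 (le_biSup (fun s => MeasurableSpace.comap (D s) inferInstance)
      ⟨ht, le_rfl⟩)) (hW _)
    (indep_of_indep_of_le_left (indepFun_prodMk_range hX₀ hW h₀ hWind _) hm) hG hA

/-- In the evolution-strategy construction with constant step size
`σ > 0`, the normalized-distance process `D_t = (−n^⊤X_{t−1})/σ` is itself a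
homogeneous Markov chain: one single Markov kernel `κ` on `ℝ` gives, for every
`t ≥ 1`, the conditional distribution of `D_{t+1}` given `D_1, …, D_t` as `κ (D_t)`
almost surely. -/
theorem markov_chain_of_constant_step_size_evolution_strategy
    {Ω : Type*} {mΩ : MeasurableSpace Ω} (μ : Measure Ω) [IsProbabilityMeasure μ]
    (d lam : ℕ) (hd : 2 ≤ d) (hlam : 1 ≤ lam)
    (n : Fin d → ℝ) (σ : ℝ) (hσ : 0 < σ)
    -- the movements: an i.i.d. array indexed by generation `t`, individual `i`, trial `j`
    (M : ℕ → Fin lam → ℕ → Ω → (Fin d → ℝ))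
    (hMmeas : ∀ t i j, Measurable (M t i j))
    (ν : Measure (Fin d → ℝ))
    (hMlaw : ∀ t i j, Measure.map (M t i j) μ = ν)
    (hMindep : iIndepFun (fun (p : ℕ × Fin lam × ℕ) => M p.1 p.2.1 p.2.2) μ)
    -- the processes
    (X : ℕ → Ω → (Fin d → ℝ))
    (J : ℕ → Fin lam → ℝ → Ω → ℕ) (Y : ℕ → Fin lam → Ω → (Fin d → ℝ))
    (I : ℕ → Ω → Fin lam) (D : ℕ → Ω → ℝ)
    -- `X_0` is independent of the movements
    (hX0meas : Measurable (X 0))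
    (hindep0 : IndepFun (X 0) (fun ω => fun t i j => M t i j ω) μ)
    -- j_{t,i}(δ) = min { j : n^⊤ M_t^{i,j} < δ }
    (hJ : ∀ t i δ ω, J t i δ ω = sInf {j : ℕ | ∑ k, n k * M t i j ω k < δ})
    -- Y_t^i = X_{t-1} + σ · M_t^{i, j_{t,i}(−n^⊤X_{t-1})}
    (hY : ∀ t : ℕ, 1 ≤ t → ∀ i ω,
      Y t i ω = X (t - 1) ω +
        σ • M t i (J t i (-(∑ k, n k * X (t - 1) ω k)) ω) ω)
    -- i_t is the smallest index maximizing the first coordinate of Y_t^i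
    (hImax : ∀ t : ℕ, 1 ≤ t → ∀ ω i',
      Y t i' ω ⟨0, by omega⟩ ≤ Y t (I t ω) ω ⟨0, by omega⟩)
    (hImin : ∀ t : ℕ, 1 ≤ t → ∀ ω i',
      (∀ i'', Y t i'' ω ⟨0, by omega⟩ ≤ Y t i' ω ⟨0, by omega⟩) → I t ω ≤ i')
    -- X_t = Y_t^{i_t}
    (hX : ∀ t : ℕ, 1 ≤ t → ∀ ω, X t ω = Y t (I t ω) ω)
    -- D_t = (−n^⊤X_{t−1}) / σ
    (hD : ∀ t : ℕ, 1 ≤ t → ∀ ω, D t ω = (-(∑ k, n k * X (t - 1) ω k)) / σ) :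
    ∃ κ : Kernel ℝ ℝ, IsMarkovKernel κ ∧
      ∀ t : ℕ, 1 ≤ t → ∀ A : Set ℝ, MeasurableSet A →
        (μ[fun ω => Set.indicator A (fun _ => (1 : ℝ)) (D (t + 1) ω) |
            ⨆ s ∈ Set.Icc 1 t, MeasurableSpace.comap (D s) inferInstance])
          =ᵐ[μ] fun ω => (κ (D t ω) A).toReal := by
  have : Nonempty (Fin lam) := ⟨⟨0, hlam⟩⟩
  have : IsProbabilityMeasure ν :=
    hMlaw 0 ⟨0, hlam⟩ 0 ▸ isProbabilityMeasure_map (hMmeas 0 _ 0).aemeasurable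
  set ℓ : (Fin d → ℝ) → ℝ := fun v => ∑ k, n k * v k
  set f : (Fin d → ℝ) →ₗ[ℝ] ℝ := LinearMap.proj ⟨0, by omega⟩
  set W : ℕ → Ω → (Fin lam × ℕ → Fin d → ℝ) := fun s ω q => M s q.1 q.2 ω
  set G : ℝ × (Fin lam × ℕ → Fin d → ℝ) → ℝ :=
    fun p => p.1 - ℓ (selectedTrial ℓ f (σ * p.1) p.2)
  have hℓ : Measurable ℓ := by fun_prop
  have hsel := measurable_selectedTrial (ι := Fin lam) (f := f) hℓ (measurable_pi_apply _)
  set Φ : (Fin d → ℝ) × (Fin lam × ℕ → Fin d → ℝ) → (Fin d → ℝ) :=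
    fun p => p.1 + σ • selectedTrial ℓ f (-ℓ p.1) p.2
  have hXrec : ∀ s ω, X (s + 1) ω = Φ (X s ω, W (s + 1) ω) := fun s ω => by
    rw [hX _ (Nat.le_add_left 1 s)]
    exact eq_add_smul_selectedTrial ℓ f hσ _ _ _
      (fun i => by rw [hY _ (Nat.le_add_left 1 s), hJ, Nat.add_sub_cancel]; rfl)
      ⟨hImax _ (Nat.le_add_left 1 s) ω, hImin _ (Nat.le_add_left 1 s) ω⟩
  have hDX : ∀ s, D (s + 1) = (fun x => -ℓ x / σ) ∘ X s := fun s => funext fun ω => by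
    rw [Function.comp_apply, hD _ (Nat.le_add_left 1 s), Nat.add_sub_cancel]
  have hDrec : ∀ s, D (s + 1 + 1) = fun ω => G (D (s + 1) ω, W (s + 1) ω) := fun s => by
    have hℓadd : ∀ x y, ℓ (x + σ • y) = ℓ x + σ * ℓ y := fun x y => by
      simp [ℓ, mul_add, Finset.sum_add_distrib, Finset.mul_sum, mul_left_comm]
    ext ω
    simp only [hDX, G, Function.comp_apply]
    rw [mul_div_cancel₀ _ hσ.ne', hXrec, hℓadd]
    field_simp
    ring
  have hMmeas' : ∀ p : ℕ × (Fin lam × ℕ), Measurable (M p.1 p.2.1 p.2.2) := fun _ => hMmeas _ _ _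
  have hMlaw' : ∀ p : ℕ × (Fin lam × ℕ), μ.map (M p.1 p.2.1 p.2.2) = ν := fun _ => hMlaw _ _ _
  have hcurry : Measurable fun (a : ℕ → Fin lam → ℕ → Fin d → ℝ) s (q : Fin lam × ℕ) =>
      a s q.1 q.2 := by fun_prop
  refine ⟨randomMapKernel G (infinitePi fun _ => ν),
    isMarkovKernel_randomMapKernel (by fun_prop) _, fun t ht A hA => ?_⟩
  exact condExp_indicator_ae_eq_of_recursion (by fun_prop) (by fun_prop) (by fun_prop) hX0meas
    (fun s => by fun_prop) (hindep0.comp measurable_id hcurry)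
    (iIndepFun_block hMmeas' hMlaw' hMindep) hXrec hDX hDrec ht
    (map_block_eq_infinitePi hMmeas' hMlaw' hMindep t) hA
end

section
/- Let λ ≥ 2, n ∈ ℝ² nonzero, H a law on ℝ² with continuous, strictly positive density h, and for δ > 0 let h*_δ(x) = λ·(h(x)𝟙_{L_δ}(x)/H(L_δ))·H_δ((−∞,[x]_1)×ℝ)^{λ−1} and c_δ(x) = δ − n^⊤x. Then for every bounded continuous function f : ℝ → ℝ with |f| ≤ M_f, the function T f : ℝ_+ → ℝ defined by (T f)(δ) = ∫_{ℝ²} f(c_δ(x)) h*_δ(x) dx is continuous on ℝ_+ and satisfies |(T f)(δ)| ≤ M_f / H(L_0) for all δ > 0. (In particular the normalized-distance chain is weak Feller.) -/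
/-!
If `m` is the law of the first coordinate under `H_δ` and `F(t) = m(-∞, t)`, then
`∫ h*_δ = λ ∫ F^(λ-1) dm`. For `λ` independent samples from `m`, the events "sample `j` is the
strict maximum" are disjoint and each has probability `∫ F^(λ-1) dm`, so `∫ h*_δ ≤ 1` and
`|T f(δ)| ≤ M_f ≤ M_f / H(L_0)`. Continuity is dominated convergence: `h*_δ ≤ λ h / H(L_{δ₀-1})`
for `δ` near `δ₀`, and `δ ↦ h*_δ(x)` is continuous whenever `x` is off the line `n^⊤x = δ₀`,
because `δ ↦ H(L_δ ∩ A)` is continuous, the line being Lebesgue-null.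
-/

open MeasureTheory Set Function ProbabilityTheory

section OrderStatistic

variable {α : Type*} [LinearOrder α] [TopologicalSpace α] [OrderClosedTopology α]
  [SecondCountableTopology α] [MeasurableSpace α] [BorelSpace α] (m : Measure α)

theorem measure_pi_setOf_forall_lt_eq_lintegral [SigmaFinite m] {k : ℕ} (j : Fin (k + 1)) :
    Measure.pi (fun _ => m) {x | ∀ i ≠ j, x i < x j} = ∫⁻ t, m (Iio t) ^ k ∂m := by
  have hB : MeasurableSet {p : α × (Fin k → α) | ∀ i, p.2 i < p.1} := by
    simp only [ofPred_forall]
    exact MeasurableSet.iInter fun i =>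
      measurableSet_lt ((measurable_pi_apply i).comp measurable_snd) measurable_fst
  have hpre : {x : Fin (k + 1) → α | ∀ i ≠ j, x i < x j} =
      MeasurableEquiv.piFinSuccAbove (fun _ => α) j ⁻¹' {p | ∀ i, p.2 i < p.1} := by
    ext x
    simp [j.forall_iff_succAbove, MeasurableEquiv.piFinSuccAbove_apply, Fin.removeNth]
  have hslice : ∀ t, Prod.mk t ⁻¹' {p : α × (Fin k → α) | ∀ i, p.2 i < p.1} =
      univ.pi fun _ => Iio t := fun t => by ext y; simp
  rw [hpre, (measurePreserving_piFinSuccAbove (fun _ => m) j).measure_preimage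
    hB.nullMeasurableSet, Measure.prod_apply hB]
  simp_rw [hslice, Measure.pi_pi, Finset.prod_const, Finset.card_univ, Fintype.card_fin]

theorem lintegral_measure_Iio_pow_le [IsFiniteMeasure m] (k : ℕ) :
    (k + 1) * ∫⁻ t, m (Iio t) ^ k ∂m ≤ m univ ^ (k + 1) := by
  have hmeas : ∀ j : Fin (k + 1), MeasurableSet {x : Fin (k + 1) → α | ∀ i ≠ j, x i < x j} := by
    intro j
    simp only [ofPred_forall]
    exact MeasurableSet.iInter fun i => MeasurableSet.iInter fun _ =>
      measurableSet_lt (measurable_pi_apply i) (measurable_pi_apply j)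
  have hdisj : Set.Pairwise (↑(Finset.univ : Finset (Fin (k + 1))) : Set (Fin (k + 1)))
      (AEDisjoint (Measure.pi fun _ => m) on fun j => {x | ∀ i ≠ j, x i < x j}) :=
    fun j _ l _ hjl => Disjoint.aedisjoint <|
      Set.disjoint_left.2 fun _ hj hl => lt_asymm (hj l hjl.symm) (hl j hjl)
  calc (k + 1) * ∫⁻ t, m (Iio t) ^ k ∂m
      = ∑ j : Fin (k + 1), Measure.pi (fun _ => m) {x | ∀ i ≠ j, x i < x j} := by
        simp [measure_pi_setOf_forall_lt_eq_lintegral]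
    _ ≤ Measure.pi (fun _ => m) univ :=
        sum_measure_le_measure_univ (fun j _ => (hmeas j).nullMeasurableSet) hdisj
    _ = m univ ^ (k + 1) := by
        rw [← pi_univ, Measure.pi_pi, Finset.prod_const, Finset.card_univ, Fintype.card_fin]

theorem integral_measureReal_Iio_pow_le [IsProbabilityMeasure m] (k : ℕ) :
    (k + 1) * ∫ t, m.real (Iio t) ^ k ∂m ≤ 1 := by
  have hmono : Monotone fun t => m.real (Iio t) := fun a b hab =>
    measureReal_mono (Iio_subset_Iio hab)
  have hofReal : ∫⁻ t, ENNReal.ofReal (m.real (Iio t) ^ k) ∂m = ∫⁻ t, m (Iio t) ^ k ∂m := by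
    simp_rw [ENNReal.ofReal_pow measureReal_nonneg, measureReal_def,
      ENNReal.ofReal_toReal (measure_ne_top _ _)]
  have key := lintegral_measure_Iio_pow_le m k
  rw [measure_univ, one_pow] at key
  rw [integral_eq_lintegral_of_nonneg_ae (.of_forall fun t => by positivity)
    (hmono.measurable.pow_const k).aestronglyMeasurable, hofReal]
  calc (k + 1) * (∫⁻ t, m (Iio t) ^ k ∂m).toReal
      = ((k + 1) * ∫⁻ t, m (Iio t) ^ k ∂m).toReal := by
        rw [ENNReal.toReal_mul]
        norm_cast
    _ ≤ 1 := ENNReal.toReal_le_of_le_ofReal zero_le_one (by simpa using key)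

end OrderStatistic

section Continuity

variable {α β : Type*} {ℓ : α → ℝ}

theorem continuousAt_indicator_setOf_lt [TopologicalSpace β] [Zero β] (g : α → β) {x : α}
    {δ₀ : ℝ} (hx : ℓ x ≠ δ₀) :
    ContinuousAt (fun δ => {y | ℓ y < δ}.indicator g x) δ₀ := by
  rcases hx.lt_or_gt with hlt | hgt
  · refine (continuousAt_const (y := g x)).congr ?_
    filter_upwards [Ioi_mem_nhds hlt] with δ hδ
    exact (indicator_of_mem (show x ∈ {y | ℓ y < δ} from hδ) g).symm
  · refine (continuousAt_const (y := (0 : β))).congr ?_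
    filter_upwards [Iio_mem_nhds hgt] with δ hδ
    exact (indicator_of_notMem (show x ∉ {y | ℓ y < δ} from fun h : ℓ x < δ => lt_asymm h hδ)
      g).symm

theorem continuous_measureReal_setOf_lt [MeasurableSpace α] (μ : Measure α) [IsFiniteMeasure μ]
    (hℓ : Measurable ℓ) (hnull : ∀ c, ∀ᵐ x ∂μ, ℓ x ≠ c) :
    Continuous fun δ => μ.real {x | ℓ x < δ} := by
  have hmeas : ∀ δ, MeasurableSet {x | ℓ x < δ} := fun δ => measurableSet_lt hℓ measurable_const
  simp_rw [← integral_indicator_one (hmeas _)]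
  refine continuous_iff_continuousAt.2 fun δ₀ => continuousAt_of_dominated (bound := 1)
    (.of_forall fun δ => (measurable_const.indicator (hmeas δ)).aestronglyMeasurable)
    (.of_forall fun δ => .of_forall fun x => ?_) (integrable_const 1) ?_
  · exact (norm_indicator_le_norm_self _ x).trans (by simp)
  · filter_upwards [hnull δ₀] with x hx using continuousAt_indicator_setOf_lt 1 hx

end Continuity

section WithDensity

variable {α : Type*} [MeasurableSpace α] {μ H : Measure α} {h : α → ℝ}

theorem integrable_of_withDensity_ofReal [IsFiniteMeasure H]
    (hH : H = μ.withDensity fun x => ENNReal.ofReal (h x)) (hh : Measurable h)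
    (h0 : ∀ x, 0 ≤ h x) : Integrable h μ := by
  refine ⟨hh.aestronglyMeasurable, (hasFiniteIntegral_iff_ofReal (.of_forall h0)).2 ?_⟩
  rw [← setLIntegral_univ, ← withDensity_apply _ MeasurableSet.univ, ← hH]
  exact measure_lt_top H univ

theorem withDensity_ofReal_ne_zero (hh : Measurable h) (hpos : ∀ x, 0 < h x) {s : Set α}
    (hs : μ s ≠ 0) : μ.withDensity (fun x => ENNReal.ofReal (h x)) s ≠ 0 := by
  rw [Ne, withDensity_apply_eq_zero' hh.ennreal_ofReal.aemeasurable]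
  simpa [hpos] using hs

theorem integral_cond_withDensity (hH : H = μ.withDensity fun x => ENNReal.ofReal (h x))
    (hh : Measurable h) (h0 : ∀ x, 0 ≤ h x) {s : Set α} (hs : MeasurableSet s) (g : α → ℝ) :
    ∫ x, g x ∂H[|s] = ∫ x, s.indicator h x / H.real s * g x ∂μ := by
  have hrestrict : ∫ x, g x ∂H.restrict s = ∫ x in s, h x * g x ∂μ := by
    rw [hH, setIntegral_withDensity_eq_setIntegral_toReal_smul hh.ennreal_ofReal
      (.of_forall fun _ => ENNReal.ofReal_lt_top) g hs]
    simp_rw [ENNReal.toReal_ofReal (h0 _), smul_eq_mul]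
  rw [ProbabilityTheory.cond, integral_smul_measure, hrestrict, ← integral_indicator hs,
    smul_eq_mul, ← integral_const_mul, ENNReal.toReal_inv, ← measureReal_def]
  congr 1 with x
  by_cases hx : x ∈ s <;> simp [hx, div_eq_inv_mul, mul_assoc]

end WithDensity

/-- The paper's `h*_δ` for `L = L_δ`: the density of the best of `lam` offspring drawn from
`H` conditioned on `L`, offspring being ranked by their first coordinate. -/
noncomputable def selectedDensity (lam : ℕ) (H : Measure (ℝ × ℝ)) (h : ℝ × ℝ → ℝ)
    (L : Set (ℝ × ℝ)) (x : ℝ × ℝ) : ℝ :=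
  lam * (L.indicator h x / H.real L) * (H.real (L ∩ {y | y.1 < x.1}) / H.real L) ^ (lam - 1)

section SelectedDensity

variable (lam : ℕ) {H : Measure (ℝ × ℝ)} {h : ℝ × ℝ → ℝ} {L : Set (ℝ × ℝ)} {ℓ : ℝ × ℝ → ℝ}

theorem selectedDensity_nonneg (h0 : ∀ x, 0 ≤ h x) (x : ℝ × ℝ) :
    0 ≤ selectedDensity lam H h L x := by
  have := indicator_nonneg (fun y _ => h0 y) x (s := L)
  unfold selectedDensity
  positivity

theorem selectedDensity_le [IsFiniteMeasure H] (h0 : ∀ x, 0 ≤ h x) (x : ℝ × ℝ) :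
    selectedDensity lam H h L x ≤ lam * h x / H.real L := by
  have hratio : H.real (L ∩ {y | y.1 < x.1}) / H.real L ≤ 1 :=
    div_le_one_of_le₀ (measureReal_mono inter_subset_left) measureReal_nonneg
  calc selectedDensity lam H h L x ≤ lam * (h x / H.real L) * 1 := by
        have := indicator_nonneg (fun y _ => h0 y) x (s := L)
        have := h0 x
        unfold selectedDensity
        gcongr
        · exact indicator_le_self' (fun y _ => h0 y) x
        · exact pow_le_one₀ (by positivity) hratio
    _ = lam * h x / H.real L := by ring

theorem measurable_selectedDensity [IsFiniteMeasure H] (hh : Measurable h)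
    (hL : MeasurableSet L) : Measurable (selectedDensity lam H h L) := by
  have hmono : Monotone fun t : ℝ => H.real (L ∩ {y | y.1 < t}) := fun a b hab =>
    measureReal_mono (inter_subset_inter_right _ fun y (hy : y.1 < a) => hy.trans_le hab)
  exact (measurable_const.mul ((hh.indicator hL).div_const _)).mul
    (((hmono.measurable.comp measurable_fst).div_const _).pow_const _)

theorem integrable_selectedDensity [IsFiniteMeasure H]
    (hH : H = volume.withDensity fun x => ENNReal.ofReal (h x)) (hh : Measurable h)
    (h0 : ∀ x, 0 ≤ h x) (hL : MeasurableSet L) : Integrable (selectedDensity lam H h L) := by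
  refine (((integrable_of_withDensity_ofReal hH hh h0).const_mul lam).div_const (H.real L)).mono'
    (measurable_selectedDensity lam hh hL).aestronglyMeasurable (.of_forall fun x => ?_)
  rw [Real.norm_of_nonneg (selectedDensity_nonneg lam h0 x)]
  exact selectedDensity_le lam h0 x

theorem integral_selectedDensity_le_one [IsFiniteMeasure H]
    (hH : H = volume.withDensity fun x => ENNReal.ofReal (h x)) (hh : Measurable h)
    (h0 : ∀ x, 0 ≤ h x) (hL : MeasurableSet L) (hL0 : H L ≠ 0) :
    ∫ x, selectedDensity lam H h L x ≤ 1 := by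
  have := cond_isProbabilityMeasure (μ := H) hL0
  set m := (H[|L]).map Prod.fst
  have : IsProbabilityMeasure m := Measure.isProbabilityMeasure_map measurable_fst.aemeasurable
  have hm : ∀ t, m.real (Iio t) = H.real (L ∩ {y | y.1 < t}) / H.real L := by
    intro t
    rw [measureReal_def, Measure.map_apply measurable_fst measurableSet_Iio, cond_apply hL,
      ENNReal.toReal_mul, ENNReal.toReal_inv, ← measureReal_def, ← measureReal_def,
      inv_mul_eq_div]
    rfl
  have hmono : Monotone fun t => m.real (Iio t) := fun a b hab =>
    measureReal_mono (Iio_subset_Iio hab)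
  calc ∫ x, selectedDensity lam H h L x
      = lam * ∫ x, m.real (Iio x.1) ^ (lam - 1) ∂H[|L] := by
        rw [integral_cond_withDensity hH hh h0 hL, ← integral_const_mul]
        congr 1 with x
        simp only [selectedDensity, hm]
        ring
    _ = lam * ∫ t, m.real (Iio t) ^ (lam - 1) ∂m := by
        rw [integral_map measurable_fst.aemeasurable
          (hmono.measurable.pow_const _).aestronglyMeasurable]
    _ ≤ 1 := by
        rcases Nat.eq_zero_or_pos lam with rfl | hlam
        · simp
        · simpa [Nat.cast_sub hlam] using integral_measureReal_Iio_pow_le m (lam - 1)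

theorem abs_integral_mul_selectedDensity_le [IsFiniteMeasure H]
    (hH : H = volume.withDensity fun x => ENNReal.ofReal (h x)) (hh : Measurable h)
    (h0 : ∀ x, 0 ≤ h x) (hL : MeasurableSet L) (hL0 : H L ≠ 0) {F : ℝ × ℝ → ℝ} {M : ℝ}
    (hM : ∀ x, |F x| ≤ M) : |∫ x, F x * selectedDensity lam H h L x| ≤ M := by
  have hM0 : 0 ≤ M := (abs_nonneg _).trans (hM 0)
  calc |∫ x, F x * selectedDensity lam H h L x|
      ≤ ∫ x, M * selectedDensity lam H h L x :=
        (Real.norm_eq_abs _).symm.trans_le <| norm_integral_le_of_norm_le ((integrable_selectedDensity lam hH hh h0 hL).const_mul M)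
          (.of_forall fun x => by
            rw [norm_mul, Real.norm_eq_abs, Real.norm_of_nonneg (selectedDensity_nonneg lam h0 x)]
            exact mul_le_mul_of_nonneg_right (hM x) (selectedDensity_nonneg lam h0 x))
    _ = M * ∫ x, selectedDensity lam H h L x := integral_const_mul _ _
    _ ≤ M := mul_le_of_le_one_right hM0 (integral_selectedDensity_le_one lam hH hh h0 hL hL0)

theorem continuousAt_selectedDensity [IsFiniteMeasure H] (hℓ : Measurable ℓ)
    (hnull : ∀ c, ∀ᵐ y ∂H, ℓ y ≠ c) {δ₀ : ℝ} (hδ₀ : H {y | ℓ y < δ₀} ≠ 0) {x : ℝ × ℝ}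
    (hx : ℓ x ≠ δ₀) :
    ContinuousAt (fun δ => selectedDensity lam H h {y | ℓ y < δ} x) δ₀ := by
  have hL := (continuous_measureReal_setOf_lt H hℓ hnull).continuousAt (x := δ₀)
  have hLx : Continuous fun δ => H.real ({y | ℓ y < δ} ∩ {y | y.1 < x.1}) := by
    simp_rw [← measureReal_restrict_apply (measurableSet_lt hℓ measurable_const)]
    exact continuous_measureReal_setOf_lt _ hℓ fun c => ae_restrict_of_ae (hnull c)
  have hδ₀' : H.real {y | ℓ y < δ₀} ≠ 0 := ENNReal.toReal_ne_zero.2 ⟨hδ₀, measure_ne_top _ _⟩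
  exact (continuousAt_const.mul ((continuousAt_indicator_setOf_lt h hx).div hL hδ₀')).mul
    ((hLx.continuousAt.div hL hδ₀').pow _)

theorem continuous_integral_mul_selectedDensity [IsFiniteMeasure H]
    (hH : H = volume.withDensity fun x => ENNReal.ofReal (h x)) (hh : Measurable h)
    (h0 : ∀ x, 0 ≤ h x) (hℓ : Measurable ℓ) (hnull : ∀ c, ∀ᵐ y, ℓ y ≠ c)
    (hpos : ∀ δ, H {y | ℓ y < δ} ≠ 0) {F : ℝ → ℝ × ℝ → ℝ} (hF : Continuous (uncurry F))
    {M : ℝ} (hM : ∀ δ x, |F δ x| ≤ M) :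
    Continuous fun δ => ∫ x, F δ x * selectedDensity lam H h {y | ℓ y < δ} x := by
  have hHnull : ∀ c, ∀ᵐ y ∂H, ℓ y ≠ c := fun c =>
    hH ▸ (withDensity_absolutelyContinuous _ _).ae_le (hnull c)
  have hM0 : 0 ≤ M := (abs_nonneg _).trans (hM 0 0)
  refine continuous_iff_continuousAt.2 fun δ₀ => continuousAt_of_dominated
    (bound := fun x => M * (lam * h x / H.real {y | ℓ y < δ₀ - 1})) ?_ ?_ ?_ ?_
  · exact .of_forall fun δ => (hF.uncurry_left δ).aestronglyMeasurable.mul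
      (measurable_selectedDensity lam hh (measurableSet_lt hℓ measurable_const)).aestronglyMeasurable
  · filter_upwards [Ioi_mem_nhds (sub_one_lt δ₀)] with δ hδ
    refine .of_forall fun x => ?_
    rw [norm_mul, Real.norm_eq_abs, Real.norm_of_nonneg (selectedDensity_nonneg lam h0 x)]
    refine mul_le_mul (hM δ x) ((selectedDensity_le lam h0 x).trans ?_)
      (selectedDensity_nonneg lam h0 x) hM0
    have := h0 x
    exact div_le_div_of_nonneg_left (by positivity)
      (ENNReal.toReal_pos (hpos _) (measure_ne_top _ _))
      (measureReal_mono (μ := H) fun y (hy : ℓ y < δ₀ - 1) => hy.trans hδ)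
  · exact ((integrable_of_withDensity_ofReal hH hh h0).const_mul _).div_const _ |>.const_mul M
  · filter_upwards [hnull δ₀] with x hx
    exact (hF.uncurry_right x).continuousAt.mul
      (continuousAt_selectedDensity lam hℓ hHnull (hpos δ₀) hx)

end SelectedDensity

section HalfPlane

variable {n : ℝ × ℝ}

theorem surjective_dot (hn : n ≠ 0) : Surjective fun y : ℝ × ℝ => n.1 * y.1 + n.2 * y.2 := by
  intro t
  by_cases h1 : n.1 = 0
  · have h2 : n.2 ≠ 0 := fun h2 => hn (Prod.ext h1 h2)
    exact ⟨(0, t / n.2), by field_simp; simp [h1]⟩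
  · exact ⟨(t / n.1, 0), by field_simp; simp⟩

theorem ae_dot_ne (hn : n ≠ 0) (c : ℝ) : ∀ᵐ y : ℝ × ℝ, n.1 * y.1 + n.2 * y.2 ≠ c := by
  let L : ℝ × ℝ →ₗ[ℝ] ℝ := (LinearMap.lsmul ℝ ℝ n.1).coprod (LinearMap.lsmul ℝ ℝ n.2)
  simpa [L] using (ae_comp_linearMap_mem_iff L volume volume (surjective_dot hn)
    (measurableSet_singleton c).compl).2 (by simp [ae_iff])

theorem volume_dot_lt_ne_zero (hn : n ≠ 0) (δ : ℝ) :
    volume {y : ℝ × ℝ | n.1 * y.1 + n.2 * y.2 < δ} ≠ 0 := by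
  obtain ⟨y, hy⟩ := surjective_dot hn (δ - 1)
  exact (isOpen_lt (by fun_prop) continuous_const).measure_ne_zero volume
    ⟨y, show _ < δ by simp only at hy; linarith⟩

end HalfPlane

theorem transition_operator_weak_feller_general
    (lam : ℕ)
    (n : ℝ × ℝ) (hn : n ≠ 0)
    (h : ℝ × ℝ → ℝ) (hh : Continuous h) (hpos : ∀ x, 0 < h x)
    (H : Measure (ℝ × ℝ)) [IsProbabilityMeasure H]
    (hH : H = volume.withDensity (fun x => ENNReal.ofReal (h x)))
    -- the selected-movement density h*_δ
    (hstar : ℝ → ℝ × ℝ → ℝ)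
    (hhstar : ∀ δ x, hstar δ x =
      (lam : ℝ) *
        (Set.indicator {y : ℝ × ℝ | n.1 * y.1 + n.2 * y.2 < δ} h x /
          (H {y : ℝ × ℝ | n.1 * y.1 + n.2 * y.2 < δ}).toReal) *
        ((H {y : ℝ × ℝ | n.1 * y.1 + n.2 * y.2 < δ ∧ y.1 < x.1}).toReal /
          (H {y : ℝ × ℝ | n.1 * y.1 + n.2 * y.2 < δ}).toReal) ^ (lam - 1)) :
    ∀ f : ℝ → ℝ, Continuous f → ∀ Mf : ℝ, (∀ u, |f u| ≤ Mf) →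
      ContinuousOn
        (fun δ => ∫ x : ℝ × ℝ, f (δ - (n.1 * x.1 + n.2 * x.2)) * hstar δ x)
        (Set.Ioi 0) ∧
      ∀ δ : ℝ, 0 < δ →
        |∫ x : ℝ × ℝ, f (δ - (n.1 * x.1 + n.2 * x.2)) * hstar δ x| ≤
          Mf / (H {y : ℝ × ℝ | n.1 * y.1 + n.2 * y.2 < 0}).toReal := by
  intro f hf Mf hMf
  obtain rfl : hstar = fun δ => selectedDensity lam H h {y | n.1 * y.1 + n.2 * y.2 < δ} :=
    funext₂ hhstar
  have h0 : ∀ x, 0 ≤ h x := fun x => (hpos x).le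
  have hdot : Measurable fun y : ℝ × ℝ => n.1 * y.1 + n.2 * y.2 := by fun_prop
  have hL0 : ∀ δ, H {y | n.1 * y.1 + n.2 * y.2 < δ} ≠ 0 := fun δ =>
    hH ▸ withDensity_ofReal_ne_zero hh.measurable hpos (volume_dot_lt_ne_zero hn δ)
  refine ⟨(continuous_integral_mul_selectedDensity lam hH hh.measurable h0 hdot (ae_dot_ne hn)
    hL0 (by fun_prop) fun δ x => hMf _).continuousOn, fun δ _ => ?_⟩
  calc _ ≤ Mf := abs_integral_mul_selectedDensity_le lam hH hh.measurable h0
        (measurableSet_lt hdot measurable_const) (hL0 δ) fun x => hMf _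
    _ ≤ Mf / (H {y : ℝ × ℝ | n.1 * y.1 + n.2 * y.2 < 0}).toReal :=
        le_div_self ((abs_nonneg _).trans (hMf 0))
          (ENNReal.toReal_pos (hL0 0) (measure_ne_top _ _)) measureReal_le_one

/-- The transition operator `T f(δ) = ∫ f(δ − n^⊤x) h*_δ(x) dx` of the
normalized-distance chain maps every bounded continuous `f : ℝ → ℝ` with `|f| ≤ M_f`
to a function that is continuous on `(0,∞)` and bounded by `M_f / H(L_0)`; in
particular the chain is weak Feller. -/
theorem transition_operator_weak_feller
    (lam : ℕ) (hlam : 2 ≤ lam)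
    (n : ℝ × ℝ) (hn : n ≠ 0)
    (h : ℝ × ℝ → ℝ) (hh : Continuous h) (hpos : ∀ x, 0 < h x)
    (H : Measure (ℝ × ℝ)) [IsProbabilityMeasure H]
    (hH : H = volume.withDensity (fun x => ENNReal.ofReal (h x)))
    -- the selected-movement density h*_δ
    (hstar : ℝ → ℝ × ℝ → ℝ)
    (hhstar : ∀ δ x, hstar δ x =
      (lam : ℝ) *
        (Set.indicator {y : ℝ × ℝ | n.1 * y.1 + n.2 * y.2 < δ} h x /
          (H {y : ℝ × ℝ | n.1 * y.1 + n.2 * y.2 < δ}).toReal) *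
        ((H {y : ℝ × ℝ | n.1 * y.1 + n.2 * y.2 < δ ∧ y.1 < x.1}).toReal /
          (H {y : ℝ × ℝ | n.1 * y.1 + n.2 * y.2 < δ}).toReal) ^ (lam - 1)) :
    ∀ f : ℝ → ℝ, Continuous f → ∀ Mf : ℝ, (∀ u, |f u| ≤ Mf) →
      ContinuousOn
        (fun δ => ∫ x : ℝ × ℝ, f (δ - (n.1 * x.1 + n.2 * x.2)) * hstar δ x)
        (Set.Ioi 0) ∧
      ∀ δ : ℝ, 0 < δ →
        |∫ x : ℝ × ℝ, f (δ - (n.1 * x.1 + n.2 * x.2)) * hstar δ x| ≤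
          Mf / (H {y : ℝ × ℝ | n.1 * y.1 + n.2 * y.2 < 0}).toReal :=
  transition_operator_weak_feller_general lam n hn h hh hpos H hH hstar hhstar
end

section
/- Let ψ : [0,+∞] → [0,1] be an Archimedean generator (ψ(0) = 1, lim_{t→+∞} ψ(t) = 0, ψ continuous and strictly decreasing on [0, inf{t : ψ(t) = 0})), and suppose ψ is 2-monotone, i.e. ψ is convex and decreasing on (0,∞). Define ψ^{−1}(u) = inf{ t : ψ(t) = u } for u ∈ [0,1] and C_ψ(u₁,u₂) = ψ(ψ^{−1}(u₁) + ψ^{−1}(u₂)). Then C_ψ is a two-dimensional copula: it is grounded, has uniform margins, and is 2-increasing. -/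
/-!
With `ψ⁻¹(u) = inf {t | ψ t = u}`, continuity of `ψ` on the compact connected space `[0,∞]`
makes `ψ⁻¹` a right inverse of `ψ` on `[0,1]`; hence `ψ⁻¹` is antitone, `ψ⁻¹(1) = 0` and
`ψ` vanishes beyond `ψ⁻¹(0)`, which gives the boundary conditions. For `t ≤ s`, `v ≤ u` the
2-increasing inequality reads `ψ(s+v) + ψ(t+u) ≤ ψ(s+u) + ψ(t+v)`. When all four arguments
are finite, `s+v` and `t+u` lie between `t+v` and `s+u` and have the same sum, so this is the
convexity of `ψ` on `[0,∞)`, obtained from convexity on `(0,∞)` by continuity; when `s` or `u`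
is infinite it reduces to monotonicity.
-/

open Set

/-- A two-dimensional copula: grounded, uniform margins, and 2-increasing on `[0,1]²`. -/
def IsCopula2 (C : ℝ → ℝ → ℝ) : Prop :=
  (∀ u ∈ Set.Icc (0 : ℝ) 1, C u 0 = 0 ∧ C 0 u = 0 ∧ C u 1 = u ∧ C 1 u = u) ∧
  (∀ a₁ b₁ a₂ b₂ : ℝ, a₁ ∈ Set.Icc (0 : ℝ) 1 → b₁ ∈ Set.Icc (0 : ℝ) 1 →
    a₂ ∈ Set.Icc (0 : ℝ) 1 → b₂ ∈ Set.Icc (0 : ℝ) 1 → a₁ ≤ b₁ → a₂ ≤ b₂ →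
    0 ≤ C b₁ b₂ - C a₁ b₂ - C b₁ a₂ + C a₁ a₂)

open Filter Topology ENNReal NNReal

lemma ConvexOn.convexOn_Ici_of_Ioi {f : ℝ → ℝ} {a : ℝ} (hf : ConvexOn ℝ (Ioi a) f)
    (hc : ContinuousOn f (Ici a)) : ConvexOn ℝ (Ici a) f := by
  refine ⟨convex_Ici a, fun x hx y hy θ η hθ hη hθη => ?_⟩
  have shift : ∀ z ∈ Ici a, Tendsto (fun ε => f (z + ε)) (𝓝[>] 0) (𝓝 (f z)) := by
    intro z hz
    refine (hc z hz).tendsto.comp (tendsto_nhdsWithin_of_tendsto_nhds_of_eventually_within _ ?_ ?_)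
    · exact ((continuous_const_add z).tendsto' 0 z (add_zero z)).mono_left nhdsWithin_le_nhds
    · exact eventually_nhdsWithin_of_forall fun ε (hε : 0 < ε) =>
        mem_Ici.2 (by linarith [mem_Ici.1 hz])
  have hxy : θ • x + η • y ∈ Ici a := convex_Ici a hx hy hθ hη hθη
  refine le_of_tendsto_of_tendsto (shift _ hxy)
    (((shift x hx).const_smul θ).add ((shift y hy).const_smul η)) ?_
  refine eventually_nhdsWithin_of_forall fun ε (hε : 0 < ε) => ?_
  have hmix : θ • (x + ε) + η • (y + ε) = θ • x + η • y + ε := by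
    simp only [smul_eq_mul]; linear_combination ε * hθη
  show f (θ • x + η • y + ε) ≤ θ • f (x + ε) + η • f (y + ε)
  rw [← hmix]
  exact hf.2 (mem_Ioi.2 (by linarith [mem_Ici.1 hx])) (mem_Ioi.2 (by linarith [mem_Ici.1 hy]))
    hθ hη hθη

lemma ConvexOn.map_add_map_le_of_add_eq {s : Set ℝ} {f : ℝ → ℝ} (hf : ConvexOn ℝ s f)
    {a b c d : ℝ} (ha : a ∈ s) (hd : d ∈ s) (hab : a ≤ b) (hac : a ≤ c)
    (hsum : b + c = a + d) : f b + f c ≤ f a + f d := by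
  rcases (show a ≤ d by linarith).eq_or_lt with rfl | had
  · obtain rfl : b = a := by linarith
    obtain rfl : c = b := by linarith
    rfl
  -- `b` and `c` are the convex combinations of `a` and `d` with swapped weights `l`, `1 - l`.
  set l := (d - b) / (d - a)
  have hda : 0 < d - a := sub_pos.2 had
  have hl0 : 0 ≤ l := div_nonneg (by linarith) hda.le
  have hl1 : 0 ≤ 1 - l := by rw [sub_nonneg, div_le_one hda]; linarith
  have hl : l * (d - a) = d - b := div_mul_cancel₀ (d - b) hda.ne'
  have hb : l • a + (1 - l) • d = b := by simp only [smul_eq_mul]; linear_combination -hl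
  have hc : (1 - l) • a + l • d = c := by simp only [smul_eq_mul]; linear_combination hl - hsum
  have h1 := hf.2 ha hd hl0 hl1 (add_sub_cancel l 1)
  have h2 := hf.2 ha hd hl1 hl0 (sub_add_cancel 1 l)
  rw [hb] at h1
  rw [hc] at h2
  simp only [smul_eq_mul] at h1 h2
  linarith

lemma ENNReal.map_add_add_map_add_le {ψ : ℝ≥0∞ → ℝ} (hanti : Antitone ψ)
    (hconv : ConvexOn ℝ (Ici 0) fun r => ψ (ENNReal.ofReal r)) {s t u v : ℝ≥0∞}
    (hts : t ≤ s) (hvu : v ≤ u) : ψ (s + v) + ψ (t + u) ≤ ψ (s + u) + ψ (t + v) := by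
  rcases eq_or_ne s ⊤ with rfl | hs
  · have := hanti (by gcongr : t + v ≤ t + u)
    simp only [top_add]
    linarith
  rcases eq_or_ne u ⊤ with rfl | hu
  · have := hanti (by gcongr : t + v ≤ s + v)
    simp only [add_top]
    linarith
  lift s to ℝ≥0 using hs
  lift u to ℝ≥0 using hu
  lift t to ℝ≥0 using ne_top_of_le_ne_top coe_ne_top hts
  lift v to ℝ≥0 using ne_top_of_le_ne_top coe_ne_top hvu
  have hψ : ∀ x y : ℝ≥0, ψ (x + y) = ψ (ENNReal.ofReal ((x : ℝ) + y)) := by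
    intro x y; rw [← NNReal.coe_add, ofReal_coe_nnreal, coe_add]
  simp only [hψ]
  norm_cast at hts hvu
  have := hconv.map_add_map_le_of_add_eq (a := t + v) (b := s + v) (c := t + u) (d := s + u)
    (mem_Ici.2 (by positivity)) (mem_Ici.2 (by positivity)) (by gcongr) (by gcongr) (by ring)
  linarith

lemma Continuous.apply_sInf_setOf_eq {α δ : Type*} [CompleteLinearOrder α] [TopologicalSpace α]
    [OrderTopology α] [TopologicalSpace δ] [T1Space δ] {f : α → δ} (hf : Continuous f) {y : δ}
    (hy : y ∈ range f) : f (sInf {x | f x = y}) = y :=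
  IsClosed.sInf_mem (s := {x | f x = y}) hy (isClosed_singleton.preimage hf)

theorem archimedean_generator_two_monotone_gives_copula_general
    (ψ : ENNReal → ℝ)
    (hψ0 : ψ 0 = 1)
    (hψtop : ψ ⊤ = 0)
    (hcont : Continuous ψ)
    (hanti : Antitone ψ)
    -- 2-monotonicity: ψ is convex (and decreasing) on (0,∞)
    (hconv : ConvexOn ℝ (Ioi (0 : ℝ)) (fun t : ℝ => ψ (ENNReal.ofReal t)))
    (C : ℝ → ℝ → ℝ)
    (hC : ∀ u₁ u₂ : ℝ, C u₁ u₂ =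
      ψ (sInf {t : ENNReal | ψ t = u₁} + sInf {t : ENNReal | ψ t = u₂})) :
    IsCopula2 C := by
  set inv : ℝ → ℝ≥0∞ := fun u => sInf {t | ψ t = u}
  change ∀ u₁ u₂, C u₁ u₂ = ψ (inv u₁ + inv u₂) at hC
  have hinv : RightInvOn inv ψ (Icc 0 1) := fun u hu =>
    hcont.apply_sInf_setOf_eq <| intermediate_value_univ ⊤ 0 hcont (by rwa [hψ0, hψtop])
  have hinv_anti : AntitoneOn inv (Icc 0 1) :=
    Function.antitoneOn_of_rightInvOn_of_mapsTo (hanti.antitoneOn univ) hinv (mapsTo_univ _ _)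
  have hinv_one : inv 1 = 0 := nonpos_iff_eq_zero.1 (sInf_le hψ0)
  have hvanish : ∀ x, ψ (inv 0 + x) = 0 := fun x => le_antisymm
    ((hanti le_self_add).trans_eq (hinv ⟨le_rfl, zero_le_one⟩))
    (hψtop ▸ hanti le_top)
  have hconv_Ici : ConvexOn ℝ (Ici 0) fun r => ψ (ENNReal.ofReal r) :=
    hconv.convexOn_Ici_of_Ioi (hcont.comp continuous_ofReal).continuousOn
  refine ⟨fun u hu => ?_, fun a₁ b₁ a₂ b₂ ha₁ hb₁ ha₂ hb₂ h₁ h₂ => ?_⟩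
  · simp only [hC, hinv_one, add_zero, zero_add, hinv.eq hu, hvanish, add_comm _ (inv 0),
      and_self]
  · have := ENNReal.map_add_add_map_add_le hanti hconv_Ici (hinv_anti ha₁ hb₁ h₁)
      (hinv_anti ha₂ hb₂ h₂)
    simp only [hC]
    linarith

/-- If `ψ : [0,∞] → [0,1]` is an Archimedean generator
(`ψ(0) = 1`, `ψ(∞) = 0`, continuous, strictly decreasing while positive) which is
2-monotone (decreasing and convex on `(0,∞)`), then
`C_ψ(u₁,u₂) = ψ(ψ⁻¹(u₁) + ψ⁻¹(u₂))`, with `ψ⁻¹(u) = inf{t : ψ(t) = u}`, is a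
two-dimensional copula. -/
theorem archimedean_generator_two_monotone_gives_copula
    (ψ : ENNReal → ℝ)
    (hψ0 : ψ 0 = 1)
    (hψtop : ψ ⊤ = 0)
    (hrange : ∀ t, ψ t ∈ Icc (0 : ℝ) 1)
    (hcont : Continuous ψ)
    (hanti : Antitone ψ)
    -- strictly decreasing on [0, inf{t : ψ(t) = 0})
    (hstrict : ∀ s t : ENNReal, s < t → 0 < ψ s → ψ t < ψ s)
    -- 2-monotonicity: ψ is convex (and decreasing) on (0,∞)
    (hconv : ConvexOn ℝ (Ioi (0 : ℝ)) (fun t : ℝ => ψ (ENNReal.ofReal t)))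
    (C : ℝ → ℝ → ℝ)
    (hC : ∀ u₁ u₂ : ℝ, C u₁ u₂ =
      ψ (sInf {t : ENNReal | ψ t = u₁} + sInf {t : ENNReal | ψ t = u₂})) :
    IsCopula2 C :=
  archimedean_generator_two_monotone_gives_copula_general ψ hψ0 hψtop hcont hanti hconv C hC
end
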